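/- (F13, complex) Any n×n complex invertible matrix G can be factored as G = U Σ O where U ∈ U(n) is unitary, Σ is a positive real diagonal matrix, and O is a complex orthogonal matrix satisfying Oᵀ O = I_n (transpose without conjugation). -/

import Mathlib

/-!
`G Gᵀ` is complex symmetric, so by the Autonne–Takagi factorization `G Gᵀ = U Σ² Uᵀ` with `U`
unitary and `Σ` real diagonal, and `Σ` is invertible because `G` is. Then `O := Σ⁻¹ Uᴴ G`
satisfies `O Oᵀ = Σ⁻¹ Uᴴ (U Σ² Uᵀ) Ū Σ⁻¹ = 1` and `G = U Σ O`.

For Takagi, let `V` be a unitary diagonalizing the Hermitian matrix `Aᴴ A`. Then `B = Vᵀ A V` is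
symmetric and `Bᴴ B` is diagonal, hence symmetric, which for a symmetric `B` means that `B` is
normal. The real and imaginary parts of `B` are then commuting real symmetric matrices, so one
real orthogonal `Q` diagonalizes both, and `B = Q D Qᵀ` with `D` complex diagonal. Finally
`D = Φ |D| Φ` with `Φ` a diagonal of square roots of the phases of `D`, which is absorbed into
the unitary factor.
-/

open Matrix Module.End

namespace LinearMap.IsSymmetric

variable {𝕜 E : Type*} [RCLike 𝕜] [NormedAddCommGroup E] [InnerProductSpace 𝕜 E]
  [FiniteDimensional 𝕜 E] {A B : E →ₗ[𝕜] E}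

theorem exists_orthonormalBasis_apply_eq_smul_of_commute (hA : A.IsSymmetric)
    (hB : B.IsSymmetric) (hAB : Commute A B) {n : ℕ} (hn : Module.finrank 𝕜 E = n) :
    ∃ (b : OrthonormalBasis (Fin n) 𝕜 E) (x y : Fin n → 𝕜),
      ∀ j, A (b j) = x j • b j ∧ B (b j) = y j • b j := by
  classical
  let V : 𝕜 × 𝕜 → Submodule 𝕜 E := fun μ => eigenspace A μ.2 ⊓ eigenspace B μ.1
  have hV : DirectSum.IsInternal V := directSum_isInternal_of_commute hA hB hAB
  have : Fintype {μ // V μ ≠ ⊥} :=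
    ((DirectSum.isInternal_submodule_iff_iSupIndep_and_iSup_eq_top V).mp hV).1
      |>.fintypeNeBotOfFiniteDimensional
  have hV' : DirectSum.IsInternal fun μ : {μ // V μ ≠ ⊥} => V μ :=
    DirectSum.isInternal_ne_bot_iff.mpr hV
  have hVorth : OrthogonalFamily 𝕜 (fun μ : {μ // V μ ≠ ⊥} => V μ) fun μ => (V μ).subtypeₗᵢ :=
    (orthogonalFamily_eigenspace_inf_eigenspace hA hB).comp Subtype.val_injective
  let μ j := (hV'.subordinateOrthonormalBasisIndex hn j hVorth).1
  refine ⟨hV'.subordinateOrthonormalBasis hn hVorth, fun j => (μ j).2, fun j => (μ j).1,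
    fun j => ?_⟩
  have hmem := hV'.subordinateOrthonormalBasis_subordinate hn j hVorth
  exact ⟨mem_eigenspace_iff.mp hmem.1, mem_eigenspace_iff.mp hmem.2⟩

end LinearMap.IsSymmetric

namespace Complex

theorem exp_half_arg_mul_I_mul_norm_mul_exp_half_arg_mul_I (z : ℂ) :
    exp (↑(arg z / 2) * I) * ‖z‖ * exp (↑(arg z / 2) * I) = z := by
  rw [mul_right_comm, ← exp_add, ← add_mul, ← ofReal_add, add_halves, mul_comm,
    norm_mul_exp_arg_mul_I]

theorem star_exp_ofReal_mul_I_mul_self (x : ℝ) : star (exp (x * I)) * exp (x * I) = 1 := by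
  rw [star_def, conj_mul', norm_exp_ofReal_mul_I, ofReal_one, one_pow]

end Complex

namespace Matrix

section RCLike

variable {𝕜 ι : Type*} [RCLike 𝕜] [Fintype ι] [DecidableEq ι]

theorem mul_toMatrix_eq_toMatrix_mul_diagonal {A : Matrix ι ι 𝕜}
    {b : OrthonormalBasis ι 𝕜 (EuclideanSpace 𝕜 ι)} {d : ι → 𝕜}
    (h : ∀ j, toEuclideanLin A (b j) = d j • b j) :
    A * (EuclideanSpace.basisFun ι 𝕜).toBasis.toMatrix b.toBasis =
      (EuclideanSpace.basisFun ι 𝕜).toBasis.toMatrix b.toBasis * diagonal d := by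
  ext i j
  simpa [Module.Basis.toMatrix_apply, mul_apply, diagonal_apply, mulVec, dotProduct, mul_comm]
    using congr($(h j) i)

theorem IsHermitian.exists_unitary_diagonalization_of_commute {A B : Matrix ι ι 𝕜}
    (hA : A.IsHermitian) (hB : B.IsHermitian) (hAB : Commute A B) :
    ∃ U ∈ unitaryGroup ι 𝕜, ∃ x y : ι → 𝕜,
      A = U * diagonal x * star U ∧ B = U * diagonal y * star U := by
  obtain ⟨b, x, y, hb⟩ :=
    (isSymmetric_toEuclideanLin_iff.mpr hA).exists_orthonormalBasis_apply_eq_smul_of_commute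
      (isSymmetric_toEuclideanLin_iff.mpr hB) (hAB.map (toLpLinAlgEquiv 2)) finrank_euclideanSpace
  let e : Fin (Fintype.card ι) ≃ ι := Fintype.equivOfCardEq (Fintype.card_fin _)
  let b' := b.reindex e
  let U := (EuclideanSpace.basisFun ι 𝕜).toBasis.toMatrix b'.toBasis
  have hU : U ∈ unitaryGroup ι 𝕜 :=
    (EuclideanSpace.basisFun ι 𝕜).toMatrix_orthonormalBasis_mem_unitary b'
  have conj {M : Matrix ι ι 𝕜} {d : ι → 𝕜} (h : M * U = U * diagonal d) :
      M = U * diagonal d * star U := by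
    rw [← h, mul_assoc, Unitary.mul_star_self_of_mem hU, mul_one]
  refine ⟨U, hU, x ∘ e.symm, y ∘ e.symm, conj ?_, conj ?_⟩
  · exact mul_toMatrix_eq_toMatrix_mul_diagonal fun j => by simpa [b'] using (hb (e.symm j)).1
  · exact mul_toMatrix_eq_toMatrix_mul_diagonal fun j => by simpa [b'] using (hb (e.symm j)).2

end RCLike

variable {ι : Type*}

theorem map_mul_ofReal {κ : Type*} [Fintype κ] (M : Matrix ι κ ℝ) (N : Matrix κ ι ℝ) :
    (M * N).map ((↑) : ℝ → ℂ) = M.map ((↑) : ℝ → ℂ) * N.map ((↑) : ℝ → ℂ) :=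
  Matrix.map_mul (f := Complex.ofRealHom)

theorem map_re_map_ofReal {B : Matrix ι ι ℂ} (hB : B.IsSymm) :
    (B.map Complex.re).map ((↑) : ℝ → ℂ) = (2 : ℂ)⁻¹ • (B + Bᴴ) := by
  ext i j
  simp [Complex.re_eq_add_conj, div_eq_inv_mul, hB.apply i j]

theorem map_im_map_ofReal {B : Matrix ι ι ℂ} (hB : B.IsSymm) :
    (B.map Complex.im).map ((↑) : ℝ → ℂ) = (2 * Complex.I)⁻¹ • (B - Bᴴ) := by
  ext i j
  simp [Complex.im_eq_sub_conj, div_eq_inv_mul, hB.apply i j]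

theorem IsSymm.mul_conjTranspose_eq_transpose [Fintype ι] {B : Matrix ι ι ℂ} (hB : B.IsSymm) :
    B * Bᴴ = (Bᴴ * B)ᵀ := by
  rw [transpose_mul, ← conjTranspose_transpose_eq_transpose_conjTranspose, hB.eq]

theorem IsSymm.commute_map_re_map_im [Fintype ι] {B : Matrix ι ι ℂ} (hB : B.IsSymm)
    (hBn : Commute B Bᴴ) : Commute (B.map Complex.re) (B.map Complex.im) := by
  have hcomm : Commute (B + Bᴴ) (B - Bᴴ) :=
    ((Commute.refl B).add_left hBn.symm).sub_right (hBn.add_left (Commute.refl _))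
  have := (hcomm.smul_left (2 : ℂ)⁻¹).smul_right (2 * Complex.I)⁻¹
  rw [← map_re_map_ofReal hB, ← map_im_map_ofReal hB] at this
  refine map_injective Complex.ofReal_injective ?_
  simpa only [map_mul_ofReal] using this.eq

variable [Fintype ι] [DecidableEq ι]

theorem diagonal_mem_unitaryGroup {R : Type*} [CommRing R] [StarRing R] {d : ι → R}
    (hd : ∀ i, star (d i) * d i = 1) : diagonal d ∈ unitaryGroup ι R := by
  rw [mem_unitaryGroup_iff', star_eq_conjTranspose, diagonal_conjTranspose, diagonal_mul_diagonal]
  exact diagonal_eq_one.mpr (funext hd)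

theorem map_ofReal_mem_unitaryGroup {Q : Matrix ι ι ℝ} (hQ : Q ∈ orthogonalGroup ι ℝ) :
    Q.map ((↑) : ℝ → ℂ) ∈ unitaryGroup ι ℂ := by
  have hstar : star (Q.map ((↑) : ℝ → ℂ)) = (star Q).map (↑) := by
    ext i j
    simp
  rw [mem_unitaryGroup_iff', hstar, ← map_mul_ofReal, Unitary.star_mul_self_of_mem hQ]
  simp

theorem IsSymm.exists_orthogonal_diagonalization_of_commute_conjTranspose {B : Matrix ι ι ℂ}
    (hB : B.IsSymm) (hBn : Commute B Bᴴ) :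
    ∃ Q ∈ orthogonalGroup ι ℝ, ∃ β : ι → ℂ,
      B = Q.map ((↑) : ℝ → ℂ) * diagonal β * (Q.map ((↑) : ℝ → ℂ))ᵀ := by
  obtain ⟨Q, hQ, x, y, hX, hY⟩ :=
    (isHermitian_iff_isSymm.mpr (hB.map Complex.re)).exists_unitary_diagonalization_of_commute
      (isHermitian_iff_isSymm.mpr (hB.map Complex.im)) (hB.commute_map_re_map_im hBn)
  refine ⟨Q, hQ, fun i => x i + Complex.I * y i, ?_⟩
  have hB' : B = (B.map Complex.re).map (↑) + Complex.I • (B.map Complex.im).map (↑) := by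
    ext i j
    simp [mul_comm Complex.I]
  rw [hB', hX, hY]
  simp only [star_eq_conjTranspose, conjTranspose_eq_transpose_of_trivial, map_mul_ofReal,
    transpose_map, diagonal_map Complex.ofReal_zero, ← diagonal_add, mul_add, add_mul]
  rw [← Matrix.smul_mul, ← Matrix.mul_smul, ← diagonal_smul]
  rfl

theorem IsSymm.exists_unitary_mul_diagonal_mul_transpose {A : Matrix ι ι ℂ} (hA : A.IsSymm) :
    ∃ W ∈ unitaryGroup ι ℂ, ∃ β : ι → ℂ, A = W * diagonal β * Wᵀ := by
  have hH := isHermitian_conjTranspose_mul_self A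
  obtain ⟨V, hV, d, hVAAV⟩ :
      ∃ V ∈ unitaryGroup ι ℂ, ∃ d : ι → ℂ, star V * (Aᴴ * A) * V = diagonal d :=
    ⟨_, hH.eigenvectorUnitary.2, _, by simpa using hH.conjStarAlgAut_star_eigenvectorUnitary⟩
  have hVV : V.map star * Vᵀ = 1 := by
    rw [← conjTranspose_transpose, ← transpose_mul, ← star_eq_conjTranspose,
      Unitary.mul_star_self_of_mem hV, transpose_one]
  have hBB : (Vᵀ * A * V)ᴴ * (Vᵀ * A * V) = diagonal d := by
    rw [← hVAAV]
    calc (Vᵀ * A * V)ᴴ * (Vᵀ * A * V) = star V * Aᴴ * (V.map star * Vᵀ) * A * V := by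
          simp only [conjTranspose_mul, transpose_conjTranspose, star_eq_conjTranspose, mul_assoc]
      _ = star V * (Aᴴ * A) * V := by rw [hVV, mul_one, mul_assoc (star V)]
  have hBs : (Vᵀ * A * V).IsSymm := by
    simp only [IsSymm, transpose_mul, transpose_transpose, hA.eq, mul_assoc]
  have hBn : Commute (Vᵀ * A * V) (Vᵀ * A * V)ᴴ := by
    rw [Commute, SemiconjBy, hBs.mul_conjTranspose_eq_transpose, hBB, diagonal_transpose]
  obtain ⟨Q, hQ, β, hBQ⟩ := hBs.exists_orthogonal_diagonalization_of_commute_conjTranspose hBn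
  refine ⟨V.map star * Q.map ((↑) : ℝ → ℂ), mul_mem (map_star_mem_unitaryGroup_iff.mpr hV)
    (map_ofReal_mem_unitaryGroup hQ), β, ?_⟩
  calc A = V.map star * Vᵀ * A * (V * star V) := by
        rw [hVV, Unitary.mul_star_self_of_mem hV, one_mul, mul_one]
    _ = V.map star * (Vᵀ * A * V) * star V := by simp only [mul_assoc]
    _ = _ := by
        rw [hBQ, transpose_mul, ← conjTranspose_transpose, transpose_transpose,
          star_eq_conjTranspose]
        simp only [mul_assoc]

/-- The Autonne–Takagi factorization. -/
theorem IsSymm.exists_unitary_mul_diagonal_nonneg_mul_transpose {A : Matrix ι ι ℂ}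
    (hA : A.IsSymm) :
    ∃ U ∈ unitaryGroup ι ℂ, ∃ s : ι → ℝ, (∀ i, 0 ≤ s i) ∧
      A = U * diagonal (fun i => (s i : ℂ)) * Uᵀ := by
  obtain ⟨W, hW, β, rfl⟩ := hA.exists_unitary_mul_diagonal_mul_transpose
  let μ i := Complex.exp (((β i).arg / 2 : ℝ) * Complex.I)
  refine ⟨W * diagonal μ, mul_mem hW (diagonal_mem_unitaryGroup fun i =>
    Complex.star_exp_ofReal_mul_I_mul_self _), fun i => ‖β i‖, fun i => norm_nonneg _, ?_⟩
  have hβ : diagonal β = diagonal μ * diagonal (fun i => (‖β i‖ : ℂ)) * diagonal μ := by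
    simp only [diagonal_mul_diagonal, μ, Complex.exp_half_arg_mul_I_mul_norm_mul_exp_half_arg_mul_I]
  rw [hβ, transpose_mul, diagonal_transpose]
  simp only [mul_assoc]

theorem exists_transpose_mul_self_eq_one_of_mul_transpose_self_eq {K : Type*} [Field K]
    [StarRing K] {G U : Matrix ι ι K} {σ : ι → K} (hU : U ∈ unitaryGroup ι K)
    (hσ : ∀ i, σ i ≠ 0) (hGG : G * Gᵀ = U * diagonal (fun i => σ i ^ 2) * Uᵀ) :
    ∃ O : Matrix ι ι K, Oᵀ * O = 1 ∧ G = U * diagonal σ * O := by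
  have hUU : Uᵀ * (star U)ᵀ = 1 := by
    rw [← transpose_mul, Unitary.star_mul_self_of_mem hU, transpose_one]
  refine ⟨diagonal σ⁻¹ * star U * G, mul_eq_one_comm.mp ?_, ?_⟩
  · calc diagonal σ⁻¹ * star U * G * (diagonal σ⁻¹ * star U * G)ᵀ
        = diagonal σ⁻¹ * star U * (G * Gᵀ) * (star U)ᵀ * diagonal σ⁻¹ := by
          simp only [transpose_mul, diagonal_transpose, mul_assoc]
      _ = diagonal σ⁻¹ * (star U * U) * diagonal (fun i => σ i ^ 2) * (Uᵀ * (star U)ᵀ) *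
            diagonal σ⁻¹ := by
          rw [hGG]
          simp only [mul_assoc]
      _ = 1 := by
          rw [Unitary.star_mul_self_of_mem hU, hUU, mul_one, mul_one, diagonal_mul_diagonal,
            diagonal_mul_diagonal, ← diagonal_one]
          congr 1
          funext i
          simp only [Pi.inv_apply]
          field_simp [hσ i]
  · calc G = U * star U * G := by rw [Unitary.mul_star_self_of_mem hU, one_mul]
      _ = U * (diagonal σ * diagonal σ⁻¹) * star U * G := by
          simp only [diagonal_mul_diagonal, Pi.inv_apply, mul_inv_cancel₀ (hσ _), diagonal_one,
            mul_one]
      _ = U * diagonal σ * (diagonal σ⁻¹ * star U * G) := by simp only [mul_assoc]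

end Matrix

theorem unitary_diag_complexOrthogonal_factorization (n : ℕ)
    (G : Matrix (Fin n) (Fin n) ℂ) (hG : IsUnit G.det) :
    ∃ (U O : Matrix (Fin n) (Fin n) ℂ) (σ : Fin n → ℝ),
      Uᴴ * U = 1 ∧ Oᵀ * O = 1 ∧ (∀ i, 0 < σ i) ∧
      G = U * Matrix.diagonal (fun i => (σ i : ℂ)) * O := by
  obtain ⟨U, hU, s, hs, hGG⟩ :=
    (isSymm_mul_transpose_self G).exists_unitary_mul_diagonal_nonneg_mul_transpose
  have hσ : ∀ i, 0 < √(s i) := by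
    refine fun i => Real.sqrt_pos.mpr ((hs i).lt_of_ne' fun hi => hG.ne_zero ?_)
    simpa [det_mul, det_diagonal, Finset.prod_eq_zero (Finset.mem_univ i), hi] using
      congrArg det hGG
  obtain ⟨O, hO, hGO⟩ := exists_transpose_mul_self_eq_one_of_mul_transpose_self_eq
    (σ := fun i => ((√(s i) : ℝ) : ℂ)) hU (fun i => Complex.ofReal_ne_zero.mpr (hσ i).ne') (by
      rw [hGG]
      simp [← Complex.ofReal_pow, Real.sq_sqrt (hs _)])
  exact ⟨U, O, fun i => √(s i), mem_unitaryGroup_iff'.mp hU, hO, hσ, hGO⟩
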